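/- arXiv:2003.04912 — 5 statements merged into one kernel-verified Lean document; each statement's English description precedes it below -/
import Mathlib

section
/- A permutation τ of size n is in the image of the flip transformation T (which reverses all maximal descending runs) if and only if every pair of adjacent ascending runs (R_i, R_{i+1}) of τ is overlapping, i.e., min(R_i) < max(R_{i+1}). -/
/-- Split a list into maximal strictly decreasing contiguous blocks ("falls"). -/
def fallSplit : List ℕ → List (List ℕ)
  | [] => []
  | a :: rest =>
    match fallSplit rest with
    | (b :: bs) :: gs => if b < a then (a :: b :: bs) :: gs else [a] :: (b :: bs) :: gs
    | gs => [a] :: gs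

/-- Split a list into maximal strictly increasing contiguous blocks ("runs"). -/
def runSplit : List ℕ → List (List ℕ)
  | [] => []
  | a :: rest =>
    match runSplit rest with
    | (b :: bs) :: gs => if a < b then (a :: b :: bs) :: gs else [a] :: (b :: bs) :: gs
    | gs => [a] :: gs

/-- The flip transformation `T`: reverse every fall. -/
def flipT (l : List ℕ) : List ℕ := ((fallSplit l).map List.reverse).flatten

/-- `l` is the one-line notation of a permutation of `{1, …, n}`. -/
def IsPermList (n : ℕ) (l : List ℕ) : Prop := l.Perm (List.range' 1 n)

/-- Every pair of adjacent runs overlaps: `min R₁ < max R₂` (pop-stacked condition). -/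
def Overlapping (l : List ℕ) : Prop :=
  ∀ R₁ R₂ : List ℕ, [R₁, R₂] <:+: runSplit l → ∃ a ∈ R₁, ∃ b ∈ R₂, a < b

/-! Runs and falls are both blocks of `List.splitBy`. If `τ = T π`, the reversed falls of `π` are
increasing, so every run of `τ` is a concatenation of consecutive reversed falls, and the break
between adjacent runs `R₁ R₂` is the break between adjacent falls `f₁ f₂` of `π`. There `π` ascends
(its entries are distinct), so `last f₁ < head f₂`, with `last f₁ ∈ R₁` and `head f₂ ∈ R₂`.
Conversely, reversing every run of `τ` produces a list whose falls are exactly the reversed runs: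
the junction of `R₁.reverse` and `R₂.reverse` reads `min R₁, max R₂`, an ascent by the overlap
condition. Hence `T` maps that list back to `τ`. -/

namespace List

variable {α β : Type*}

theorem isChain_iff_forall_infix_pair {R : α → α → Prop} {l : List α} :
    l.IsChain R ↔ ∀ a b, [a, b] <:+: l → R a b := by
  rw [isChain_iff_forall_rel_of_append_cons_cons]
  constructor
  · rintro h a b ⟨s, t, rfl⟩
    exact h (l₁ := s) (l₂ := t) (by simp)
  · rintro h a b s t rfl
    exact h a b ⟨s, t, by simp⟩

theorem exists_infix_pair_of_infix_map {f : α → β} {l : List α} {x y : β}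
    (h : [x, y] <:+: l.map f) : ∃ a b, [a, b] <:+: l ∧ f a = x ∧ f b = y := by
  obtain ⟨_ | ⟨a, _ | ⟨b, _ | _⟩⟩, hl, he⟩ := infix_map_iff.1 h <;> simp at he
  exact ⟨a, b, hl, he.1.symm, he.2.symm⟩

theorem getLast_head_infix_flatten {L : List (List α)} {c₁ c₂ : List α} (h : [c₁, c₂] <:+: L)
    (h₁ : c₁ ≠ []) (h₂ : c₂ ≠ []) : [c₁.getLast h₁, c₂.head h₂] <:+: L.flatten := by
  obtain ⟨s, t, rfl⟩ := h
  obtain ⟨b, c, rfl⟩ := exists_cons_of_ne_nil h₂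
  refine ⟨s.flatten ++ c₁.dropLast, c ++ t.flatten, ?_⟩
  conv_rhs => rw [← dropLast_append_getLast h₁]
  simp

theorem IsChain.head_le_of_mem [Preorder α] {l : List α} (h : l.IsChain (· < ·)) {x : α}
    (hx : x ∈ l) : l.head (ne_nil_of_mem hx) ≤ x := by
  obtain _ | ⟨a, t⟩ := l
  · simp at hx
  · rcases mem_cons.1 hx with rfl | hx
    · exact le_rfl
    · exact ((isChain_iff_pairwise.1 h).rel_head_tail hx).le

theorem IsChain.le_getLast_of_mem [Preorder α] {l : List α} (h : l.IsChain (· < ·)) {x : α}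
    (hx : x ∈ l) : x ≤ l.getLast (ne_nil_of_mem hx) := by
  have hp := isChain_iff_pairwise.1 h
  rw [← dropLast_append_getLast (ne_nil_of_mem hx), pairwise_append] at hp
  rw [← dropLast_append_getLast (ne_nil_of_mem hx), mem_append, mem_singleton] at hx
  rcases hx with hx | hx
  · exact (hp.2.2 x hx _ (mem_singleton_self _)).le
  · exact hx.le

theorem splitBy_append_of_isChain {r : α → α → Bool} {g l bs : List α} {b : α}
    {gs : List (List α)} (hg : g ≠ []) (hc : g.IsChain (r · ·))
    (hl : l.splitBy r = (b :: bs) :: gs) :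
    (g ++ l).splitBy r =
      if r (g.getLast hg) b then (g ++ b :: bs) :: gs else g :: (b :: bs) :: gs := by
  rw [splitBy_eq_iff] at hl ⊢
  obtain ⟨rfl, hn, hchain, hbdry⟩ := hl
  rw [isChain_cons] at hbdry
  split_ifs with hr
  · refine ⟨by simp, by simpa using hn, ?_, ?_⟩
    · simp only [mem_cons, forall_eq_or_imp] at hchain ⊢
      refine ⟨isChain_append.2 ⟨hc, hchain.1, ?_⟩, hchain.2⟩
      intro x hx y hy
      simp_all [getLast?_eq_some_getLast hg]
    · refine isChain_cons.2 ⟨fun y hy => ?_, hbdry.2⟩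
      obtain ⟨_, hb, h⟩ := hbdry.1 y hy
      exact ⟨by simp, hb, by rwa [getLast_append_of_ne_nil _ (cons_ne_nil b bs)]⟩
  · refine ⟨by simp, by simpa [hg] using hn, ?_, ?_⟩
    · simpa [hc] using hchain
    · exact isChain_cons_cons.2 ⟨⟨hg, cons_ne_nil b bs, by simpa using hr⟩, isChain_cons.2 hbdry⟩

theorem splitBy_cons_of_splitBy_eq_cons {r : α → α → Bool} {a b : α} {l bs : List α}
    {gs : List (List α)} (hl : l.splitBy r = (b :: bs) :: gs) :
    (a :: l).splitBy r = if r a b then (a :: b :: bs) :: gs else [a] :: (b :: bs) :: gs :=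
  splitBy_append_of_isChain (cons_ne_nil a []) (isChain_singleton a) hl

theorem exists_splitBy_flatten_eq_map_flatten {r : α → α → Bool} :
    ∀ {G : List (List α)}, [] ∉ G → (∀ g ∈ G, g.IsChain (r · ·)) →
      ∃ L : List (List (List α)), [] ∉ L ∧ L.flatten = G ∧ G.flatten.splitBy r = L.map flatten
  | [], _, _ => ⟨[], by simp, rfl, rfl⟩
  | g :: G, hn, hc => by
    have hg : g ≠ [] := fun h => hn (h ▸ mem_cons_self)
    have hgc : g.IsChain (r · ·) := hc g mem_cons_self
    obtain ⟨_ | ⟨c, L⟩, hL, rfl, hsplit⟩ := exists_splitBy_flatten_eq_map_flatten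
      (fun h => hn (mem_cons_of_mem g h)) (fun g' hg' => hc g' (mem_cons_of_mem g hg'))
    · exact ⟨[[g]], by simp, rfl, by simp [splitBy_of_isChain hg hgc]⟩
    obtain ⟨hc₀, hL⟩ : c ≠ [] ∧ [] ∉ L := by simpa using hL
    obtain ⟨b, bs, hcb⟩ : ∃ b bs, c.flatten = b :: bs := by
      refine exists_cons_of_ne_nil (flatten_ne_nil_iff.2 ⟨c.head hc₀, head_mem hc₀, ?_⟩)
      exact fun h => hn (mem_cons_of_mem g (mem_flatten.2 ⟨c, mem_cons_self, h ▸ head_mem hc₀⟩))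
    rw [map_cons, hcb] at hsplit
    have hsplit' := splitBy_append_of_isChain hg hgc hsplit
    split_ifs at hsplit'
    · exact ⟨(g :: c) :: L, by simpa using hL, rfl, by simpa [hcb] using hsplit'⟩
    · exact ⟨[g] :: c :: L, by simpa [hc₀] using hL, rfl, by simpa [hcb] using hsplit'⟩

theorem exists_infix_pair_subset_of_infix_splitBy_flatten {r : α → α → Bool}
    {G : List (List α)} (hn : [] ∉ G) (hc : ∀ g ∈ G, g.IsChain (r · ·)) {R₁ R₂ : List α}
    (h : [R₁, R₂] <:+: G.flatten.splitBy r) : ∃ g₁ g₂, [g₁, g₂] <:+: G ∧ g₁ ⊆ R₁ ∧ g₂ ⊆ R₂ := by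
  obtain ⟨L, hL, rfl, hsplit⟩ := exists_splitBy_flatten_eq_map_flatten hn hc
  rw [hsplit] at h
  obtain ⟨c₁, c₂, hc, rfl, rfl⟩ := exists_infix_pair_of_infix_map h
  have h₁ : c₁ ≠ [] := fun h => hL (h ▸ hc.subset mem_cons_self)
  have h₂ : c₂ ≠ [] := fun h => hL (h ▸ hc.subset (mem_cons_of_mem _ mem_cons_self))
  exact ⟨_, _, getLast_head_infix_flatten hc h₁ h₂,
    fun x hx => mem_flatten.2 ⟨_, getLast_mem h₁, hx⟩,
    fun x hx => mem_flatten.2 ⟨_, head_mem h₂, hx⟩⟩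

theorem exists_lt_of_infix_splitBy_gt [LinearOrder α] {l : List α} (hl : l.Nodup)
    {f₁ f₂ : List α} (h : [f₁, f₂] <:+: l.splitBy (· > ·)) : ∃ a ∈ f₁, ∃ b ∈ f₂, a < b := by
  obtain ⟨h₁, h₂, hle⟩ :=
    isChain_iff_forall_infix_pair.1 (isChain_getLast_head_splitBy _ l) f₁ f₂ h
  have hadj := getLast_head_infix_flatten h h₁ h₂
  rw [flatten_splitBy] at hadj
  have hne : f₁.getLast h₁ ≠ f₂.head h₂ := by simpa using hl.sublist hadj.sublist
  exact ⟨_, getLast_mem h₁, _, head_mem h₂, lt_of_le_of_ne (by simpa using hle) hne⟩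

theorem splitBy_gt_flatten_map_reverse_splitBy_lt [LinearOrder α] {l : List α}
    (h : ∀ R₁ R₂, [R₁, R₂] <:+: l.splitBy (· < ·) → ∃ a ∈ R₁, ∃ b ∈ R₂, a < b) :
    ((l.splitBy (· < ·)).map reverse).flatten.splitBy (· > ·) =
      (l.splitBy (· < ·)).map reverse := by
  apply splitBy_flatten
  · simp [nil_notMem_splitBy]
  · intro m hm
    obtain ⟨R, hR, rfl⟩ := mem_map.1 hm
    simpa [isChain_reverse] using isChain_of_mem_splitBy hR
  · rw [isChain_map, isChain_iff_forall_infix_pair]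
    intro R₁ R₂ hR
    obtain ⟨a, ha, b, hb, hab⟩ := h R₁ R₂ hR
    have hc₁ := isChain_of_mem_splitBy (hR.subset mem_cons_self)
    have hc₂ := isChain_of_mem_splitBy (hR.subset (mem_cons_of_mem _ mem_cons_self))
    refine ⟨by simpa using ne_nil_of_mem ha, by simpa using ne_nil_of_mem hb, ?_⟩
    have hmin_lt_max := (IsChain.head_le_of_mem (by simpa using hc₁) ha).trans_lt
      (hab.trans_le (IsChain.le_getLast_of_mem (by simpa using hc₂) hb))
    simpa [getLast_reverse, head_reverse] using hmin_lt_max.le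

end List

open List

theorem runSplit_eq_splitBy : ∀ l : List ℕ, runSplit l = l.splitBy (· < ·)
  | [] => rfl
  | a :: l => by
    rw [runSplit, runSplit_eq_splitBy l]
    rcases h : l.splitBy (· < ·) with _ | ⟨_ | ⟨b, bs⟩, gs⟩
    · simp [splitBy_eq_nil.1 h, splitBy_of_isChain]
    · exact absurd (h ▸ mem_cons_self) (nil_notMem_splitBy _ l)
    · simp [h, splitBy_cons_of_splitBy_eq_cons h]

theorem fallSplit_eq_splitBy : ∀ l : List ℕ, fallSplit l = l.splitBy (· > ·)
  | [] => rfl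
  | a :: l => by
    rw [fallSplit, fallSplit_eq_splitBy l]
    rcases h : l.splitBy (· > ·) with _ | ⟨_ | ⟨b, bs⟩, gs⟩
    · simp [splitBy_eq_nil.1 h, splitBy_of_isChain]
    · exact absurd (h ▸ mem_cons_self) (nil_notMem_splitBy _ l)
    · simp [h, splitBy_cons_of_splitBy_eq_cons h]

/-- A permutation τ is in the image of the flip transformation T iff every pair of
adjacent runs overlaps (min of the left run is smaller than max of the right run). -/
theorem popStacked_iff_overlapping (n : ℕ) (τ : List ℕ) (hτ : IsPermList n τ) :
    (∃ π : List ℕ, IsPermList n π ∧ flipT π = τ) ↔ Overlapping τ := by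
  simp only [Overlapping, runSplit_eq_splitBy]
  constructor
  · rintro ⟨π, hπ, rfl⟩ R₁ R₂ hR
    rw [flipT, fallSplit_eq_splitBy] at hR
    have hrev : ∀ g ∈ (π.splitBy (· > ·)).map reverse, g.IsChain (· < ·) := by
      intro g hg
      obtain ⟨f, hf, rfl⟩ := mem_map.1 hg
      simpa [isChain_reverse] using isChain_of_mem_splitBy hf
    obtain ⟨g₁, g₂, hg, h₁, h₂⟩ := exists_infix_pair_subset_of_infix_splitBy_flatten
      (by simp [nil_notMem_splitBy]) (by simpa using hrev) hR
    obtain ⟨f₁, f₂, hf, rfl, rfl⟩ := exists_infix_pair_of_infix_map hg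
    obtain ⟨a, ha, b, hb, hab⟩ := exists_lt_of_infix_splitBy_gt (hπ.nodup_iff.2 nodup_range') hf
    exact ⟨a, h₁ (mem_reverse.2 ha), b, h₂ (mem_reverse.2 hb), hab⟩
  · intro hov
    refine ⟨((τ.splitBy (· < ·)).map reverse).flatten, ?_, ?_⟩
    · have hperm := Perm.flatMap_left (τ.splitBy (· < ·)) (fun R _ => reverse_perm R)
      rw [flatMap_def, flatMap_id', flatten_splitBy] at hperm
      exact hperm.trans hτ
    · rw [flipT, fallSplit_eq_splitBy, splitBy_gt_flatten_map_reverse_splitBy_lt hov, map_map]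
      simp [flatten_splitBy]
end

section
/- If a permutation π of size n is not the identity, then the number of inversions of T(π) is strictly smaller than the number of inversions of π. Consequently, for every permutation π of size n there exists m ≤ n(n-1)/2 with T^m(π) = id. -/
/-- The number of inversions of a list. -/
def inversions (l : List ℕ) : ℕ :=
  ((Finset.range l.length ×ˢ Finset.range l.length).filter
    (fun p => p.1 < p.2 ∧ l.getD p.2 0 < l.getD p.1 0)).card

/-!
Reversing a fall of length `k` destroys its `k(k-1)/2` internal inversions, while an inversion
between two different falls survives, because it only depends on which values the two falls
contain. A permutation other than the identity has a descent, and a descent lies inside a fall of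
length at least two, so `T` strictly decreases the number of inversions. That number is at most
`n(n-1)/2`, which bounds the number of iterations needed to reach the identity.
-/

namespace List

def invCount : List ℕ → ℕ
  | [] => 0
  | a :: t => t.countP (· < a) + invCount t

def crossInvCount (a b : List ℕ) : ℕ := (a.map fun x => b.countP (· < x)).sum

theorem countP_eq_sum_range_getD (t : List ℕ) (p : ℕ → Bool) :
    t.countP p = ∑ j ∈ Finset.range t.length, if p (t.getD j 0) then 1 else 0 := by
  induction t with
  | nil => simp
  | cons a t ih =>
    rw [countP_cons, length_cons, Finset.sum_range_succ', ih]
    simp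

theorem invCount_append (a b : List ℕ) :
    invCount (a ++ b) = invCount a + invCount b + crossInvCount a b := by
  induction a with
  | nil => simp [invCount, crossInvCount]
  | cons x t ih =>
    simp only [cons_append, invCount, countP_append, ih, crossInvCount, map_cons, sum_cons]
    ring

theorem Perm.crossInvCount_left {a a' : List ℕ} (h : a ~ a') (b : List ℕ) :
    crossInvCount a b = crossInvCount a' b :=
  (h.map _).sum_eq

theorem Perm.crossInvCount_right (a : List ℕ) {b b' : List ℕ} (h : b ~ b') :
    crossInvCount a b = crossInvCount a b' :=
  congrArg sum (map_congr_left fun _ _ => h.countP_eq _)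

theorem invCount_eq_zero_of_pairwise_lt {l : List ℕ} (h : l.Pairwise (· < ·)) :
    invCount l = 0 := by
  induction l with
  | nil => rfl
  | cons a t ih =>
    rw [pairwise_cons] at h
    simp only [invCount, ih h.2, add_zero, countP_eq_zero, decide_eq_true_eq, not_lt]
    exact fun x hx => (h.1 x hx).le

theorem invCount_pos_of_lt {a b : ℕ} (t : List ℕ) (h : b < a) : 0 < invCount (a :: b :: t) :=
  Nat.add_pos_left (countP_pos_iff.2 ⟨b, mem_cons_self, by simpa using h⟩) _

theorem invCount_le_choose_two (l : List ℕ) : invCount l ≤ l.length.choose 2 := by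
  induction l with
  | nil => simp [invCount]
  | cons a t ih =>
    have : t.countP (· < a) ≤ t.length := countP_le_length
    simp only [invCount, length_cons, Nat.choose_succ_succ', Nat.choose_one_right, Nat.reduceAdd]
    omega

theorem flatten_map_reverse_perm (Bs : List (List ℕ)) : (Bs.map reverse).flatten ~ Bs.flatten :=
  Perm.flatten_congr (forall₂_map_left_iff.2 (forall₂_same.2 fun B _ => reverse_perm B))

theorem invCount_flatten_of_isChain_gt {Bs : List (List ℕ)} (h : ∀ B ∈ Bs, B.IsChain (· > ·)) :
    invCount Bs.flatten = invCount (Bs.map reverse).flatten + (Bs.map invCount).sum := by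
  induction Bs with
  | nil => simp
  | cons B Bs ih =>
    have hB : invCount B.reverse = 0 :=
      invCount_eq_zero_of_pairwise_lt (isChain_iff_pairwise.1 (isChain_reverse.2 (h B (by simp))))
    simp only [map_cons, flatten_cons, sum_cons, invCount_append, hB,
      (reverse_perm B).crossInvCount_left, Perm.crossInvCount_right B (flatten_map_reverse_perm Bs),
      ih fun B hB => h B (mem_cons_of_mem _ hB)]
    ring

end List

open List

theorem inversions_eq_invCount (l : List ℕ) : inversions l = invCount l := by
  induction l with
  | nil => simp [inversions, invCount]
  | cons a t ih =>
    rw [invCount, ← ih, inversions, inversions, Finset.card_filter, Finset.card_filter,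
      Finset.sum_product, Finset.sum_product, length_cons, Finset.sum_range_succ', add_comm,
      countP_eq_sum_range_getD, Finset.sum_range_succ']
    congr 1
    · simp
    · refine Finset.sum_congr rfl fun i _ => ?_
      rw [Finset.sum_range_succ']
      simp

theorem fallSplit_cons (b : ℕ) (t : List ℕ) : ∃ B Bs, fallSplit (b :: t) = (b :: B) :: Bs := by
  rw [fallSplit]
  split
  · split_ifs <;> exact ⟨_, _, rfl⟩
  · exact ⟨_, _, rfl⟩

theorem fallSplit_cons_cons {a b : ℕ} {t B : List ℕ} {Bs : List (List ℕ)}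
    (h : fallSplit (b :: t) = (b :: B) :: Bs) :
    fallSplit (a :: b :: t) = if b < a then (a :: b :: B) :: Bs else [a] :: (b :: B) :: Bs := by
  rw [fallSplit, h]

theorem flatten_fallSplit (l : List ℕ) : (fallSplit l).flatten = l := by
  induction l with
  | nil => rfl
  | cons a rest ih =>
    rcases rest with _ | ⟨b, t⟩
    · rfl
    · obtain ⟨B, Bs, h⟩ := fallSplit_cons b t
      rw [h] at ih
      rw [fallSplit_cons_cons h]
      split_ifs <;> simpa using ih

theorem isChain_gt_of_mem_fallSplit {l : List ℕ} : ∀ B ∈ fallSplit l, B.IsChain (· > ·) := by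
  induction l with
  | nil => simp [fallSplit]
  | cons a rest ih =>
    rcases rest with _ | ⟨b, t⟩
    · simp [fallSplit]
    · obtain ⟨B, Bs, h⟩ := fallSplit_cons b t
      rw [h] at ih
      rw [fallSplit_cons_cons h]
      split_ifs with hba
      · exact forall_mem_cons.2
          ⟨(ih _ mem_cons_self).cons_cons hba, fun C hC => ih C (mem_cons_of_mem _ hC)⟩
      · exact forall_mem_cons.2 ⟨isChain_singleton a, ih⟩

/-- A descent `a > b` can only occur inside a fall. -/
theorem exists_mem_fallSplit_two_le_length {l : List ℕ} (hl : ¬ l.IsChain (· ≤ ·)) :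
    ∃ B ∈ fallSplit l, 2 ≤ B.length := by
  induction l with
  | nil => exact absurd isChain_nil hl
  | cons a rest ih =>
    rcases rest with _ | ⟨b, t⟩
    · exact absurd (isChain_singleton a) hl
    · obtain ⟨B, Bs, h⟩ := fallSplit_cons b t
      rw [fallSplit_cons_cons h]
      split_ifs with hba
      · exact ⟨_, mem_cons_self, by simp⟩
      · obtain ⟨C, hC, hlen⟩ := ih fun hc => hl (isChain_cons_cons.2 ⟨not_lt.1 hba, hc⟩)
        rw [h] at hC
        exact ⟨C, mem_cons_of_mem _ hC, hlen⟩

theorem flipT_perm (l : List ℕ) : flipT l ~ l := by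
  simpa only [flipT, flatten_fallSplit] using flatten_map_reverse_perm (fallSplit l)

theorem invCount_flipT_add_sum (l : List ℕ) :
    invCount (flipT l) + ((fallSplit l).map invCount).sum = invCount l := by
  conv_rhs => rw [← flatten_fallSplit l]
  exact (invCount_flatten_of_isChain_gt fun _ => isChain_gt_of_mem_fallSplit _).symm

theorem invCount_flipT_lt {l : List ℕ} (hl : ¬ l.IsChain (· ≤ ·)) :
    invCount (flipT l) < invCount l := by
  obtain ⟨B, hB, hlen⟩ := exists_mem_fallSplit_two_le_length hl
  obtain ⟨x, y, t, rfl⟩ : ∃ x y t, B = x :: y :: t := by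
    match B, hlen with
    | x :: y :: t, _ => exact ⟨x, y, t, rfl⟩
  have hpos : 0 < invCount (x :: y :: t) :=
    invCount_pos_of_lt t (isChain_cons_cons.1 (isChain_gt_of_mem_fallSplit _ hB)).1
  have hle := single_le_sum (fun _ _ => Nat.zero_le _) _ (mem_map_of_mem (f := invCount) hB)
  have := invCount_flipT_add_sum l
  omega

theorem exists_iterate_eq_of_measure_lt {α : Type*} {f : α → α} {μ : α → ℕ} {S : Set α} {t : α}
    (hS : ∀ y ∈ S, f y ∈ S) (hμ : ∀ y ∈ S, y ≠ t → μ (f y) < μ y) {x : α} (hx : x ∈ S) :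
    ∃ m ≤ μ x, f^[m] x = t := by
  induction h : μ x using Nat.strong_induction_on generalizing x with
  | _ k ih =>
    by_cases hxt : x = t
    · exact ⟨0, Nat.zero_le _, hxt⟩
    · have hlt : μ (f x) < k := h ▸ hμ x hx hxt
      obtain ⟨m, hm, hfm⟩ := ih _ hlt (hS x hx) rfl
      exact ⟨m + 1, by omega, hfm⟩

/-- Applying T to a non-identity permutation strictly decreases the number of inversions;
consequently every permutation of size n is sorted after at most n(n-1)/2 iterations of T. -/
theorem flipT_inversions_decrease (n : ℕ) :
    (∀ π : List ℕ, IsPermList n π → π ≠ List.range' 1 n →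
      inversions (flipT π) < inversions π) ∧
    (∀ π : List ℕ, IsPermList n π →
      ∃ m ≤ n * (n - 1) / 2, flipT^[m] π = List.range' 1 n) := by
  have hdec : ∀ π : List ℕ, IsPermList n π → π ≠ List.range' 1 n →
      inversions (flipT π) < inversions π := by
    intro π hπ hne
    simp only [inversions_eq_invCount]
    refine invCount_flipT_lt fun hsorted => hne ?_
    exact hπ.eq_of_pairwise' (isChain_iff_pairwise.1 hsorted) pairwise_le_range'
  refine ⟨hdec, fun π hπ => ?_⟩
  obtain ⟨m, hm, hflip⟩ := exists_iterate_eq_of_measure_lt (S := {π | IsPermList n π})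
    (fun ρ hρ => (flipT_perm ρ).trans hρ) hdec hπ
  refine ⟨m, hm.trans ?_, hflip⟩
  rw [← Nat.choose_two_right, inversions_eq_invCount, ← length_range' (s := 1) (n := n),
    ← hπ.length_eq]
  exact invCount_le_choose_two π
end

section
/- The scanline mapping π ↦ w(π), where w(π) is the word whose i-th letter is the index of the run of π containing the value i, is injective on permutations. -/
/-- The scanline word of a permutation: for each value v = 1, …, n in increasing order,
record the (1-based) index of the run of the permutation containing v. -/
def scanline (l : List ℕ) : List ℕ :=
  (List.range' 1 l.length).map (fun v => (runSplit l).findIdx (fun R => R.contains v) + 1)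

lemma flatten_runSplit (l : List ℕ) : (runSplit l).flatten = l := by
  induction l with
  | nil => rfl
  | cons a rest ih =>
    rw [runSplit]
    rcases hr : runSplit rest with _ | ⟨_ | ⟨b, bs⟩, gs⟩ <;> simp_all
    split <;> simp_all

lemma isChain_of_mem_runSplit (l : List ℕ) : ∀ R ∈ runSplit l, R.IsChain (· < ·) := by
  induction l with
  | nil => simp [runSplit]
  | cons a rest ih =>
    rw [runSplit]
    rcases hr : runSplit rest with _ | ⟨_ | ⟨b, bs⟩, gs⟩ <;> simp_all
    split <;> simp_all [List.isChain_cons_cons]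

lemma ne_nil_of_mem_runSplit (l : List ℕ) : ∀ R ∈ runSplit l, R ≠ [] := by
  induction l with
  | nil => simp [runSplit]
  | cons a rest ih =>
    rw [runSplit]
    rcases hr : runSplit rest with _ | ⟨_ | ⟨b, bs⟩, gs⟩ <;> simp_all
    split <;> simp_all

/-- 0-based, unlike the letters of `scanline`; equals the number of runs when `v ∉ l`. -/
def runIndex (l : List ℕ) (v : ℕ) : ℕ := (runSplit l).findIdx (fun R => R.contains v)

lemma scanline_eq_map_runIndex (l : List ℕ) :
    scanline l = (List.range' 1 l.length).map (runIndex l · + 1) := rfl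

lemma runIndex_lt_length {l : List ℕ} {v : ℕ} (hv : v ∈ l) :
    runIndex l v < (runSplit l).length := by
  rw [← flatten_runSplit l, List.mem_flatten] at hv
  obtain ⟨R, hR, hvR⟩ := hv
  exact List.findIdx_lt_length_of_exists ⟨R, hR, by simpa using hvR⟩

lemma mem_runSplit_getElem_iff {l : List ℕ} (hl : l.Nodup) {j : ℕ}
    (hj : j < (runSplit l).length) (v : ℕ) :
    v ∈ (runSplit l)[j] ↔ v ∈ l ∧ runIndex l v = j := by
  have hdisj : (runSplit l).Pairwise List.Disjoint :=
    (List.nodup_flatten.mp (by rwa [flatten_runSplit])).2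
  constructor
  · intro hv
    refine ⟨flatten_runSplit l ▸ List.mem_flatten.mpr ⟨_, List.getElem_mem hj, hv⟩, ?_⟩
    rw [runIndex, List.findIdx_eq hj]
    refine ⟨by simpa using hv, fun i hi => ?_⟩
    have hij := List.pairwise_iff_getElem.mp hdisj i j (hi.trans hj) hj hi
    simpa using fun hvi => hij hvi hv
  · rintro ⟨hvl, rfl⟩
    simpa [runIndex] using List.findIdx_getElem (w := runIndex_lt_length hvl)

lemma runSplit_getElem_eq_filter {l s : List ℕ} (hls : l.Perm s) (hs : s.Pairwise (· < ·))
    {j : ℕ} (hj : j < (runSplit l).length) :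
    (runSplit l)[j] = s.filter (runIndex l · = j) := by
  have hl : l.Nodup := hls.nodup_iff.mpr hs.nodup
  have hrun : (runSplit l)[j].Pairwise (· < ·) :=
    List.isChain_iff_pairwise.mp (isChain_of_mem_runSplit l _ (List.getElem_mem hj))
  refine List.Perm.eq_of_pairwise' hrun (hs.filter _) ?_
  rw [List.perm_ext_iff_of_nodup hrun.nodup (hs.nodup.filter _)]
  intro v
  simp [mem_runSplit_getElem_iff hl hj, hls.mem_iff]

lemma length_runSplit_le_of_runIndex_eq {l₁ l₂ : List ℕ} (hl₁ : l₁.Nodup) (hsub : l₁ ⊆ l₂)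
    (h : ∀ v ∈ l₁, runIndex l₁ v = runIndex l₂ v) :
    (runSplit l₁).length ≤ (runSplit l₂).length := by
  by_contra! hlt
  obtain ⟨v, hv⟩ := List.exists_mem_of_ne_nil _ (ne_nil_of_mem_runSplit l₁ _ (List.getElem_mem hlt))
  obtain ⟨hvl, hidx⟩ := (mem_runSplit_getElem_iff hl₁ hlt v).mp hv
  have := runIndex_lt_length (hsub hvl)
  have := h v hvl
  omega

lemma eq_of_runIndex_eq {l₁ l₂ s : List ℕ} (hs : s.Pairwise (· < ·))
    (h₁ : l₁.Perm s) (h₂ : l₂.Perm s) (h : ∀ v ∈ s, runIndex l₁ v = runIndex l₂ v) :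
    l₁ = l₂ := by
  have hlen : (runSplit l₁).length = (runSplit l₂).length :=
    le_antisymm
      (length_runSplit_le_of_runIndex_eq (h₁.nodup_iff.mpr hs.nodup)
        (fun v hv => (h₁.trans h₂.symm).subset hv) fun v hv => h v (h₁.subset hv))
      (length_runSplit_le_of_runIndex_eq (h₂.nodup_iff.mpr hs.nodup)
        (fun v hv => (h₂.trans h₁.symm).subset hv) fun v hv => (h v (h₂.subset hv)).symm)
  have hruns : runSplit l₁ = runSplit l₂ := by
    refine List.ext_getElem hlen fun j hj₁ hj₂ => ?_
    rw [runSplit_getElem_eq_filter h₁ hs hj₁, runSplit_getElem_eq_filter h₂ hs hj₂]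
    exact List.filter_congr fun v hv => by rw [h v hv]
  rw [← flatten_runSplit l₁, ← flatten_runSplit l₂, hruns]

/-- The scanline mapping is injective on permutations. -/
theorem scanline_injective (n : ℕ) (l₁ l₂ : List ℕ)
    (h₁ : IsPermList n l₁) (h₂ : IsPermList n l₂)
    (h : scanline l₁ = scanline l₂) : l₁ = l₂ := by
  have hlen₁ : l₁.length = n := by simpa using h₁.length_eq
  have hlen₂ : l₂.length = n := by simpa using h₂.length_eq
  rw [scanline_eq_map_runIndex, scanline_eq_map_runIndex, hlen₁, hlen₂, List.map_eq_map_iff] at h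
  exact eq_of_runIndex_eq List.pairwise_lt_range' h₁ h₂ fun v hv => Nat.add_right_cancel (h v hv)
end

section
/- The number of pairs (L, C), where L ⊆ {1,…,k} and C ⊆ ⋃_{j=1}^{k-1} {(j,j+1),(j+1,j)} with the property that (j,j') ∈ C only if j,j' ∈ L, and such that whenever both j and j+1 are in L at least one of (j,j+1), (j+1,j) lies in C, satisfies the recurrence a_k = 4a_{k-1} − 2a_{k-2} for k ≥ 3, with a_1 = 2 and a_2 = 6. -/
def StP (k : ℕ) (p : Set ℕ × Set (ℕ × ℕ)) : Prop :=
  (∀ x ∈ p.1, 1 ≤ x ∧ x ≤ k) ∧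
  (∀ q ∈ p.2, ∃ j, 1 ≤ j ∧ j + 1 ≤ k ∧ (q = (j, j + 1) ∨ q = (j + 1, j))) ∧
  (∀ q ∈ p.2, q.1 ∈ p.1 ∧ q.2 ∈ p.1) ∧
  (∀ j, 1 ≤ j → j + 1 ≤ k → j ∈ p.1 → j + 1 ∈ p.1 →
    ((j, j + 1) ∈ p.2 ∨ (j + 1, j) ∈ p.2))

/-- The number of states of the automaton 𝒜ₖ: pairs (L, C) with L ⊆ {1,…,k},
C ⊆ ⋃_{1≤j≤k-1} {(j,j+1),(j+1,j)}, where (j,j') ∈ C only if j, j' ∈ L, and such that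
whenever j and j+1 both lie in L, at least one of (j,j+1), (j+1,j) lies in C. -/
noncomputable def numStates (k : ℕ) : ℕ :=
  Nat.card {p : Set ℕ × Set (ℕ × ℕ) //
    (∀ x ∈ p.1, 1 ≤ x ∧ x ≤ k) ∧
    (∀ q ∈ p.2, ∃ j, 1 ≤ j ∧ j + 1 ≤ k ∧ (q = (j, j + 1) ∨ q = (j + 1, j))) ∧
    (∀ q ∈ p.2, q.1 ∈ p.1 ∧ q.2 ∈ p.1) ∧
    (∀ j, 1 ≤ j → j + 1 ≤ k → j ∈ p.1 → j + 1 ∈ p.1 →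
      ((j, j + 1) ∈ p.2 ∨ (j + 1, j) ∈ p.2))}

lemma numStates_eq (k : ℕ) : numStates k = Nat.card {p // StP k p} := rfl

lemma finite_aux (k : ℕ) (R : Set ℕ × Set (ℕ × ℕ) → Prop)
    (h : ∀ p, R p → StP k p) : Finite {p // R p} := by
  have h1 : (Set.Icc 1 k : Set ℕ).Finite := Set.finite_Icc 1 k
  have h2 : ((Set.Icc 1 k ×ˢ Set.Icc 1 k) : Set (ℕ × ℕ)).Finite := h1.prod h1
  have f1 : Finite {b | b ⊆ (Set.Icc 1 k : Set ℕ)} := h1.finite_subsets.to_subtype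
  have f2 : Finite {b | b ⊆ (Set.Icc 1 k ×ˢ Set.Icc 1 k : Set (ℕ × ℕ))} :=
    h2.finite_subsets.to_subtype
  have hsub : ∀ p, R p → p.1 ⊆ Set.Icc 1 k ∧ p.2 ⊆ Set.Icc 1 k ×ˢ Set.Icc 1 k := by
    intro p hp
    obtain ⟨hL, _, hmem, _⟩ := h p hp
    constructor
    · intro x hx; exact Set.mem_Icc.2 (hL x hx)
    · intro q hq
      obtain ⟨h1', h2'⟩ := hmem q hq
      exact Set.mem_prod.2 ⟨Set.mem_Icc.2 (hL _ h1'), Set.mem_Icc.2 (hL _ h2')⟩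
  exact Finite.of_injective
    (fun x => ((⟨x.1.1, (hsub _ x.2).1⟩, ⟨x.1.2, (hsub _ x.2).2⟩) :
      {b | b ⊆ (Set.Icc 1 k : Set ℕ)} × {b | b ⊆ (Set.Icc 1 k ×ˢ Set.Icc 1 k : Set (ℕ × ℕ))}))
    (by
      intro a b hab
      apply Subtype.ext
      have h1' := congrArg (fun z => z.1.1) hab
      have h2' := congrArg (fun z => z.2.1) hab
      exact Prod.ext h1' h2')

instance (k : ℕ) : Finite {p // StP k p} := finite_aux k _ (fun _ h => h)
instance (k : ℕ) : Finite {p // StP k p ∧ k ∈ p.1} := finite_aux k _ (fun _ h => h.1)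
instance (k : ℕ) : Finite {p // StP k p ∧ k ∉ p.1} := finite_aux k _ (fun _ h => h.1)

open Classical in
lemma card_split (k : ℕ) :
    Nat.card {p // StP k p} =
      Nat.card {p // StP k p ∧ k ∈ p.1} + Nat.card {p // StP k p ∧ k ∉ p.1} := by
  have e : {p // StP k p} ≃
      {p // StP k p ∧ k ∈ p.1} ⊕ {p // StP k p ∧ k ∉ p.1} := by
    refine Equiv.trans (Equiv.sumCompl (fun x : {p // StP k p} => k ∈ x.1.1)).symm ?_
    exact Equiv.sumCongr
      (Equiv.subtypeSubtypeEquivSubtypeInter (StP k) (fun p => k ∈ p.1))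
      (Equiv.subtypeSubtypeEquivSubtypeInter (StP k) (fun p => k ∉ p.1))
  rw [Nat.card_congr e, Nat.card_sum]

lemma out_succ (k : ℕ) {p : Set ℕ × Set (ℕ × ℕ)} :
    (StP (k + 1) p ∧ (k + 1) ∉ p.1) ↔ StP k p := by
  constructor
  · rintro ⟨⟨hL, hC, hmem, hcov⟩, hout⟩
    refine ⟨?_, ?_, hmem, ?_⟩
    · intro x hx
      have := hL x hx
      have : x ≠ k + 1 := fun he => hout (he ▸ hx)
      omega
    · intro q hq
      obtain ⟨j, hj1, hj2, hj3⟩ := hC q hq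
      refine ⟨j, hj1, ?_, hj3⟩
      rcases Nat.lt_or_ge (j + 1) (k + 1) with h | h
      · omega
      · exfalso
        have hjk : j = k := by omega
        subst hjk
        rcases hj3 with h3 | h3 <;> subst h3
        · exact hout (hmem _ hq).2
        · exact hout (hmem _ hq).1
    · intro j h1 h2 h3 h4
      exact hcov j h1 (by omega) h3 h4
  · rintro ⟨hL, hC, hmem, hcov⟩
    have hout : (k + 1) ∉ p.1 := fun h => by have := hL _ h; omega
    refine ⟨⟨fun x hx => by have := hL x hx; omega,
      fun q hq => by obtain ⟨j, hj1, hj2, hj3⟩ := hC q hq; exact ⟨j, hj1, by omega, hj3⟩,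
      hmem, ?_⟩, hout⟩
    intro j h1 h2 h3 h4
    have : j + 1 ≤ k := by
      rcases Nat.lt_or_ge (j+1) (k+1) with h|h
      · omega
      · exfalso; have : j + 1 = k + 1 := by omega
        exact hout (this ▸ h4)
    exact hcov j h1 this h3 h4

lemma card_out (k : ℕ) :
    Nat.card {p // StP (k + 1) p ∧ (k + 1) ∉ p.1} = Nat.card {p // StP k p} :=
  Nat.card_congr (Equiv.subtypeEquivRight (fun p => out_succ k))


lemma restrict_stp (k : ℕ) (p : Set ℕ × Set (ℕ × ℕ)) (hp : StP (k + 1) p) :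
    StP k (p.1 \ {k + 1}, p.2 \ {(k, k + 1), (k + 1, k)}) := by
  obtain ⟨hL, hC, hmem, hcov⟩ := hp
  have hrange : ∀ q ∈ p.2 \ ({(k, k + 1), (k + 1, k)} : Set (ℕ × ℕ)),
      ∃ j, 1 ≤ j ∧ j + 1 ≤ k ∧ (q = (j, j + 1) ∨ q = (j + 1, j)) := by
    rintro q ⟨hq, hq2⟩
    obtain ⟨j, hj1, hj2, hj3⟩ := hC q hq
    refine ⟨j, hj1, ?_, hj3⟩
    by_contra hcon
    have hjk : j = k := by omega
    subst hjk
    exact hq2 (by rcases hj3 with h | h <;> simp [h])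
  refine ⟨?_, hrange, ?_, ?_⟩
  · rintro x ⟨hx, hx2⟩
    have := hL x hx
    have : x ≠ k + 1 := fun he => hx2 (by simp [he])
    omega
  · rintro q hq
    obtain ⟨j, hj1, hj2, hj3⟩ := hrange q hq
    have h1 := (hmem q hq.1).1
    have h2 := (hmem q hq.1).2
    rcases hj3 with h | h <;> subst h <;>
      exact ⟨⟨h1, by simp; omega⟩, ⟨h2, by simp; omega⟩⟩
  · rintro j hj1 hj2 ⟨hj3, _⟩ ⟨hj4, _⟩
    rcases hcov j hj1 (by omega) hj3 hj4 with h | h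
    · exact Or.inl ⟨h, by simp [Prod.ext_iff]; omega⟩
    · exact Or.inr ⟨h, by simp [Prod.ext_iff]; omega⟩

lemma extend_stp (k : ℕ) (q : Set ℕ × Set (ℕ × ℕ)) (hq : StP k q) (S : Set (ℕ × ℕ))
    (hS : ∀ x ∈ S, (x = (k, k + 1) ∨ x = (k + 1, k)) ∧ k ∈ q.1)
    (hcov : k ∈ q.1 → S.Nonempty) :
    StP (k + 1) (q.1 ∪ {k + 1}, q.2 ∪ S) := by
  obtain ⟨hL, hC, hmem, hcovq⟩ := hq
  have hk1 : (k + 1) ∉ q.1 := fun h => by have := hL _ h; omega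
  refine ⟨?_, ?_, ?_, ?_⟩
  · rintro x (hx | hx)
    · have := hL x hx; omega
    · simp only [Set.mem_singleton_iff] at hx; omega
  · rintro x (hx | hx)
    · obtain ⟨j, hj1, hj2, hj3⟩ := hC x hx
      exact ⟨j, hj1, by omega, hj3⟩
    · obtain ⟨he, hk⟩ := hS x hx
      have h1k : 1 ≤ k := (hL k hk).1
      exact ⟨k, h1k, le_refl _, he⟩
  · rintro x (hx | hx)
    · exact ⟨Or.inl (hmem x hx).1, Or.inl (hmem x hx).2⟩
    · obtain ⟨he, hk⟩ := hS x hx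
      rcases he with rfl | rfl
      · exact ⟨Or.inl hk, Or.inr rfl⟩
      · exact ⟨Or.inr rfl, Or.inl hk⟩
  · intro j hj1 hj2 hj3 hj4
    rcases Nat.lt_or_ge (j + 1) (k + 1) with h | h
    · have hj3' : j ∈ q.1 := by
        rcases hj3 with h' | h'
        · exact h'
        · simp only [Set.mem_singleton_iff] at h'; omega
      have hj4' : j + 1 ∈ q.1 := by
        rcases hj4 with h' | h'
        · exact h'
        · simp only [Set.mem_singleton_iff] at h'; omega
      rcases hcovq j hj1 (by omega) hj3' hj4' with h' | h'
      · exact Or.inl (Or.inl h')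
      · exact Or.inr (Or.inl h')
    · have hjk : k = j := by omega
      subst hjk
      have hkq : k ∈ q.1 := by
        rcases hj3 with h' | h'
        · exact h'
        · simp only [Set.mem_singleton_iff] at h'; omega
      obtain ⟨x, hx⟩ := hcov hkq
      rcases (hS x hx).1 with rfl | rfl
      · exact Or.inl (Or.inr hx)
      · exact Or.inr (Or.inr hx)

def decodeC (k : ℕ) (i : Fin 3) : Set (ℕ × ℕ) :=
  if i = 0 then {(k, k + 1)} else if i = 1 then {(k + 1, k)} else {(k, k + 1), (k + 1, k)}

lemma decodeC_sub (k : ℕ) (i : Fin 3) :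
    ∀ x ∈ decodeC k i, x = (k, k + 1) ∨ x = (k + 1, k) := by
  intro x hx
  unfold decodeC at hx
  fin_cases i <;> simp_all

lemma decodeC_ne (k : ℕ) (i : Fin 3) : (decodeC k i).Nonempty := by
  unfold decodeC; fin_cases i <;> simp

open Classical in
noncomputable def bigEquiv (k : ℕ) :
    {p : Set ℕ × Set (ℕ × ℕ) // StP (k + 1) p ∧ (k + 1) ∈ p.1} ≃
      ({p : Set ℕ × Set (ℕ × ℕ) // StP k p ∧ k ∈ p.1} × Fin 3) ⊕
        {p : Set ℕ × Set (ℕ × ℕ) // StP k p ∧ k ∉ p.1} where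
  toFun x :=
    if h : k ∈ x.1.1 then
      Sum.inl (⟨(x.1.1 \ {k + 1}, x.1.2 \ {(k, k + 1), (k + 1, k)}),
          restrict_stp k x.1 x.2.1, ⟨h, by simp⟩⟩,
        if (k, k + 1) ∈ x.1.2 then (if (k + 1, k) ∈ x.1.2 then 2 else 0) else 1)
    else
      Sum.inr ⟨(x.1.1 \ {k + 1}, x.1.2 \ {(k, k + 1), (k + 1, k)}),
        restrict_stp k x.1 x.2.1, fun hc => h hc.1⟩
  invFun y :=
    match y with
    | Sum.inl (q, i) =>
        ⟨(q.1.1 ∪ {k + 1}, q.1.2 ∪ decodeC k i),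
          extend_stp k q.1 q.2.1 _ (fun x hx => ⟨decodeC_sub k i x hx, q.2.2⟩)
            (fun _ => decodeC_ne k i), Or.inr rfl⟩
    | Sum.inr q =>
        ⟨(q.1.1 ∪ {k + 1}, q.1.2),
          by
            have := extend_stp k q.1 q.2.1 ∅ (by simp) (fun h => absurd h q.2.2)
            rwa [Set.union_empty] at this, Or.inr rfl⟩
  left_inv := by
    rintro ⟨p, hp, hk1⟩
    have hL1 : p.1 \ {k + 1} ∪ {k + 1} = p.1 := by
      apply Set.diff_union_of_subset
      simpa using hk1
    have hC1 : ∀ S : Set (ℕ × ℕ), (∀ a, a ∈ S ↔ a ∈ p.2 ∧ ((a = (k, k+1)) ∨ a = (k+1, k))) →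
        p.2 \ {(k, k + 1), (k + 1, k)} ∪ S = p.2 := by
      intro S hSiff
      ext a
      simp only [Set.mem_union, Set.mem_diff, Set.mem_insert_iff, Set.mem_singleton_iff, hSiff]
      constructor
      · rintro (⟨ha, -⟩ | ⟨ha, -⟩) <;> exact ha
      · intro ha
        by_cases hpr : a = (k, k + 1) ∨ a = (k + 1, k)
        · exact Or.inr ⟨ha, hpr⟩
        · exact Or.inl ⟨ha, hpr⟩
    by_cases h : k ∈ p.1
    · simp only [dif_pos h]
      have hboth : ((k, k + 1) ∈ p.2) ∨ ((k + 1, k) ∈ p.2) :=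
        hp.2.2.2 k (hp.1 k h).1 (le_refl _) h hk1
      apply Subtype.ext
      show (_, _) = p
      refine Prod.ext hL1 ?_
      show p.2 \ {(k, k + 1), (k + 1, k)} ∪ decodeC k _ = p.2
      by_cases h1 : (k, k + 1) ∈ p.2 <;> by_cases h2 : (k + 1, k) ∈ p.2
      · apply hC1
        intro a
        simp only [if_pos h1, if_pos h2, decodeC]
        norm_num
        constructor
        · rintro (rfl | rfl) <;> simp [h1, h2]
        · tauto
      · apply hC1
        intro a
        simp only [if_pos h1, if_neg h2, decodeC]
        norm_num
        constructor
        · rintro rfl; simp [h1]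
        · rintro ⟨ha, rfl | rfl⟩
          · rfl
          · exact absurd ha h2
      · apply hC1
        intro a
        simp only [if_neg h1, if_pos h2, decodeC]
        norm_num
        constructor
        · rintro rfl; simp [h2]
        · rintro ⟨ha, rfl | rfl⟩
          · exact absurd ha h1
          · rfl
      · exact absurd hboth (by tauto)
    · simp only [dif_neg h]
      apply Subtype.ext
      show (_, _) = p
      refine Prod.ext hL1 ?_
      show p.2 \ {(k, k + 1), (k + 1, k)} = p.2
      have h1 : (k, k + 1) ∉ p.2 := fun hc => h (hp.2.2.1 _ hc).1
      have h2 : (k + 1, k) ∉ p.2 := fun hc => h (hp.2.2.1 _ hc).2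
      ext a
      simp only [Set.mem_diff, Set.mem_insert_iff, Set.mem_singleton_iff]
      constructor
      · rintro ⟨ha, -⟩; exact ha
      · intro ha
        refine ⟨ha, ?_⟩
        rintro (rfl | rfl)
        · exact h1 ha
        · exact h2 ha
  right_inv := by
    rintro (⟨⟨q, hq, hk⟩, i⟩ | ⟨q, hq, hk⟩)
    · have hk1 : (k + 1) ∉ q.1 := fun h => by have := hq.1 _ h; omega
      have h1 : (k, k + 1) ∉ q.2 := fun hc => hk1 (hq.2.2.1 _ hc).2
      have h2 : (k + 1, k) ∉ q.2 := fun hc => hk1 (hq.2.2.1 _ hc).1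
      have hA : (q.1 ∪ {k + 1}) \ {k + 1} = q.1 := by
        ext a
        simp only [Set.mem_diff, Set.mem_union, Set.mem_singleton_iff]
        constructor
        · rintro ⟨ha | rfl, hne⟩
          · exact ha
          · exact absurd rfl hne
        · intro ha; exact ⟨Or.inl ha, fun he => hk1 (he ▸ ha)⟩
      have hB : (q.2 ∪ decodeC k i) \ {(k, k + 1), (k + 1, k)} = q.2 := by
        ext a
        simp only [Set.mem_diff, Set.mem_union, Set.mem_insert_iff, Set.mem_singleton_iff]
        constructor
        · rintro ⟨ha | ha, hne⟩
          · exact ha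
          · exact absurd (decodeC_sub k i a ha) hne
        · intro ha
          refine ⟨Or.inl ha, ?_⟩
          rintro (rfl | rfl)
          · exact h1 ha
          · exact h2 ha
      simp only [dif_pos (show k ∈ (q.1 ∪ {k + 1} : Set ℕ) from Or.inl hk)]
      refine congrArg Sum.inl (Prod.ext (Subtype.ext (Prod.ext hA hB)) ?_)
      fin_cases i <;>
        simp [decodeC, Set.mem_union, h1, h2, Prod.ext_iff] <;> omega
    · have hk1 : (k + 1) ∉ q.1 := fun h => by have := hq.1 _ h; omega
      have h1 : (k, k + 1) ∉ q.2 := fun hc => hk (hq.2.2.1 _ hc).1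
      have h2 : (k + 1, k) ∉ q.2 := fun hc => hk (hq.2.2.1 _ hc).2
      have hA : (q.1 ∪ {k + 1}) \ {k + 1} = q.1 := by
        ext a
        simp only [Set.mem_diff, Set.mem_union, Set.mem_singleton_iff]
        constructor
        · rintro ⟨ha | rfl, hne⟩
          · exact ha
          · exact absurd rfl hne
        · intro ha; exact ⟨Or.inl ha, fun he => hk1 (he ▸ ha)⟩
      have hB : q.2 \ {(k, k + 1), (k + 1, k)} = q.2 := by
        ext a
        simp only [Set.mem_diff, Set.mem_insert_iff, Set.mem_singleton_iff]
        constructor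
        · rintro ⟨ha, -⟩; exact ha
        · intro ha
          refine ⟨ha, ?_⟩
          rintro (rfl | rfl)
          · exact h1 ha
          · exact h2 ha
      have hknot : k ∉ (q.1 ∪ {k + 1} : Set ℕ) := by
        rintro (h | h)
        · exact hk h
        · simp only [Set.mem_singleton_iff] at h; omega
      simp only [dif_neg hknot]
      exact congrArg Sum.inr (Subtype.ext (Prod.ext hA hB))


lemma card_in (k : ℕ) :
    Nat.card {p // StP (k + 1) p ∧ (k + 1) ∈ p.1} =
      3 * Nat.card {p // StP k p ∧ k ∈ p.1} + Nat.card {p // StP k p ∧ k ∉ p.1} := by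
  rw [Nat.card_congr (bigEquiv k), Nat.card_sum, Nat.card_prod]
  have : Nat.card (Fin 3) = 3 := by simp
  rw [this, Nat.mul_comm]

lemma in_zero : Nat.card {p // StP 0 p ∧ 0 ∈ p.1} = 0 := by
  have : IsEmpty {p // StP 0 p ∧ 0 ∈ p.1} :=
    ⟨fun x => by have := x.2.1.1 0 x.2.2; omega⟩
  exact Nat.card_of_isEmpty

lemma out_zero : Nat.card {p // StP 0 p ∧ 0 ∉ p.1} = 1 := by
  have hU : ∀ x : {p // StP 0 p ∧ 0 ∉ p.1}, x.1 = ((∅ : Set ℕ), (∅ : Set (ℕ × ℕ))) := by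
    rintro ⟨p, hp, -⟩
    have h1 : p.1 = ∅ := by
      ext x; simp only [Set.mem_empty_iff_false, iff_false]
      intro hx; have := hp.1 x hx; omega
    have h2 : p.2 = ∅ := by
      ext q; simp only [Set.mem_empty_iff_false, iff_false]
      intro hq; obtain ⟨j, hj1, hj2, -⟩ := hp.2.1 q hq; omega
    exact Prod.ext h1 h2
  have hst : StP 0 ((∅ : Set ℕ), (∅ : Set (ℕ × ℕ))) ∧ (0 : ℕ) ∉ (∅ : Set ℕ) := by
    refine ⟨⟨?_, ?_, ?_, ?_⟩, ?_⟩ <;> simp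
  have : Unique {p // StP 0 p ∧ 0 ∉ p.1} :=
    { default := ⟨((∅ : Set ℕ), (∅ : Set (ℕ × ℕ))), hst⟩,
      uniq := fun x => Subtype.ext (hU x) }
  exact Nat.card_unique

lemma numStates_succ (k : ℕ) :
    numStates (k + 1) = 3 * Nat.card {p // StP k p ∧ k ∈ p.1} +
      Nat.card {p // StP k p ∧ k ∉ p.1} + numStates k := by
  rw [numStates_eq, card_split (k + 1), card_in k, card_out k, ← numStates_eq]

/-- The number of states satisfies a₁ = 2, a₂ = 6 and aₖ = 4aₖ₋₁ − 2aₖ₋₂ for k ≥ 3. -/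
theorem numStates_recurrence :
    numStates 1 = 2 ∧ numStates 2 = 6 ∧
    ∀ k, 3 ≤ k →
      (numStates k : ℤ) = 4 * (numStates (k - 1) : ℤ) - 2 * (numStates (k - 2) : ℤ) := by
  have hA : ∀ k, numStates k =
      Nat.card {p // StP k p ∧ k ∈ p.1} + Nat.card {p // StP k p ∧ k ∉ p.1} := by
    intro k; rw [numStates_eq]; exact card_split k
  have h0 : numStates 0 = 1 := by rw [hA 0, in_zero, out_zero]
  have h1 : numStates 1 = 2 := by
    rw [numStates_succ 0, in_zero, out_zero, h0]
  have hin : ∀ k, Nat.card {p // StP (k + 1) p ∧ (k + 1) ∈ p.1} =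
      3 * Nat.card {p // StP k p ∧ k ∈ p.1} + Nat.card {p // StP k p ∧ k ∉ p.1} := card_in
  have h2 : numStates 2 = 6 := by
    rw [numStates_succ 1, hin 0, in_zero, out_zero, card_out 0, ← numStates_eq, h0, h1]
  refine ⟨h1, h2, ?_⟩
  intro k hk
  obtain ⟨m, rfl⟩ : ∃ m, k = m + 2 := ⟨k - 2, by omega⟩
  have e1 : m + 2 - 1 = m + 1 := by omega
  have e2 : m + 2 - 2 = m := by omega
  rw [e1, e2]
  have hs2 := numStates_succ (m + 1)
  have hfix : numStates (m + 1 + 1) = numStates (m + 2) := rfl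
  rw [hfix] at hs2
  have hs1 := hA (m + 1)
  have hout := card_out m
  rw [← numStates_eq] at hout
  have hi := hin m
  have hs0 := numStates_succ m
  omega
end

section
/- For fixed k ≥ 1, the formal power series E_k(z) = Σ_{n ≥ 0} A(n,k) z^n (generating function of the k-th column of the Eulerian triangle) has the partial fraction decomposition E_k(z) = 1/(1−kz) + Σ_{j=1}^{k-1} (−1)^j ((k−j)z)^{j−1} / (1−(k−j)z)^{j+1}. -/
open PowerSeries

/-!
Expanding `A(n,k)` over `j`, the column series is an alternating sum of the series
`Σₙ cⁿ C(n+1, j) zⁿ` with `c = k - j`. After pulling out `z^(j-1)` this is the series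
`Σₘ C(j+m, j) (cz)ᵐ = (1 - cz)^-(j+1)`, i.e. the negative binomial series rescaled by `c`;
the term `j = 0` is `1/(1 - kz)`.
-/

namespace PowerSeries

variable {R : Type*} [CommRing R]

theorem mk_choose_succ_eq_X_pow_mul (j : ℕ) :
    (mk fun n => ((n + 1).choose j : R)) = X ^ (j - 1) * mk fun m => ((j + m).choose j : R) := by
  ext n
  rw [coeff_X_pow_mul', coeff_mk, coeff_mk]
  split_ifs with h
  · rcases j with _ | j
    · simp
    · congr 2; omega
  · rw [Nat.choose_eq_zero_of_lt (by omega), Nat.cast_zero]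

theorem mk_choose_succ_mul_one_sub_pow (j : ℕ) :
    (mk fun n => ((n + 1).choose j : R)) * (1 - X) ^ (j + 1) = X ^ (j - 1) := by
  rw [mk_choose_succ_eq_X_pow_mul, mul_assoc, mk_add_choose_mul_one_sub_pow_eq_one, mul_one]

theorem mk_pow_mul_choose_succ_mul_one_sub_C_mul_X_pow (c : R) (j : ℕ) :
    (mk fun n => c ^ n * ((n + 1).choose j : R)) * (1 - C c * X) ^ (j + 1) =
      (C c * X) ^ (j - 1) := by
  simpa [rescale_mk] using congrArg (rescale c) (mk_choose_succ_mul_one_sub_pow (R := R) j)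

theorem mk_pow_mul_choose_succ_eq {K : Type*} [Field K] (c : K) (j : ℕ) :
    (mk fun n => c ^ n * ((n + 1).choose j : K)) =
      (C c * X) ^ (j - 1) * ((1 - C c * X) ^ (j + 1))⁻¹ := by
  rw [eq_mul_inv_iff_mul_eq (by simp), mk_pow_mul_choose_succ_mul_one_sub_C_mul_X_pow]

end PowerSeries

/-- Partial fraction decomposition of the generating function of the k-th column of the
Eulerian triangle: Σ_n A(n,k) zⁿ = 1/(1−kz) + Σ_{j=1}^{k-1} (−1)^j ((k−j)z)^{j−1}/(1−(k−j)z)^{j+1},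
where A(n,k) = Σ_{j=0}^{k-1} (−1)^j (k−j)^n C(n+1,j). -/
theorem eulerian_column_partial_fraction (k : ℕ) (hk : 1 ≤ k) :
    (PowerSeries.mk fun n => ∑ j ∈ Finset.range k,
        (-1 : ℚ) ^ j * ((k - j : ℕ) : ℚ) ^ n * ((n + 1).choose j : ℚ)) =
      (1 - PowerSeries.C (k : ℚ) * PowerSeries.X)⁻¹ +
      ∑ j ∈ Finset.Icc 1 (k - 1),
        (-1 : PowerSeries ℚ) ^ j *
          (PowerSeries.C ((k - j : ℕ) : ℚ) * PowerSeries.X) ^ (j - 1) *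
          ((1 - PowerSeries.C ((k - j : ℕ) : ℚ) * PowerSeries.X) ^ (j + 1))⁻¹ := by
  have hsplit : (PowerSeries.mk fun n => ∑ j ∈ Finset.range k,
        (-1 : ℚ) ^ j * ((k - j : ℕ) : ℚ) ^ n * ((n + 1).choose j : ℚ)) =
      ∑ j ∈ Finset.range k, C ((-1 : ℚ) ^ j) *
        mk fun n => ((k - j : ℕ) : ℚ) ^ n * ((n + 1).choose j : ℚ) := by
    ext n
    simp only [coeff_mk, map_sum, coeff_C_mul, mul_assoc]
  have hrange : Finset.range k = insert 0 (Finset.Icc 1 (k - 1)) := by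
    ext j
    simp only [Finset.mem_range, Finset.mem_insert, Finset.mem_Icc]
    omega
  rw [hsplit, hrange, Finset.sum_insert (by simp)]
  simp only [mk_pow_mul_choose_succ_eq, map_pow, map_neg, map_one, mul_assoc]
  simp
end
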